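/- arXiv:1507.02108 — 12 statements merged into one kernel-verified Lean document; each statement's English description precedes it below -/
import Mathlib

section
/- Let p > 1, n ≥ 1, k ≥ n+1 be real/integer parameters and define λ_k = (1/2)(√(4k²(p-1) + n²(p-2)²) − np). Then 0 < λ_k < (k² − n²)/n. -/
theorem lambda_k_bounds (p : ℝ) (n k : ℕ) (hp : 1 < p) (hn : 1 ≤ n) (hk : n + 1 ≤ k) :
    0 < (Real.sqrt (4 * (k : ℝ)^2 * (p - 1) + (n : ℝ)^2 * (p - 2)^2) - n * p) / 2 ∧
    (Real.sqrt (4 * (k : ℝ)^2 * (p - 1) + (n : ℝ)^2 * (p - 2)^2) - n * p) / 2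
      < ((k : ℝ)^2 - (n : ℝ)^2) / n := by
  have hn' : (1:ℝ) ≤ n := by exact_mod_cast hn
  have hk' : (n:ℝ) + 1 ≤ k := by exact_mod_cast hk
  have hn0 : (0:ℝ) < n := by linarith
  have hkn : (n:ℝ)^2 < (k:ℝ)^2 := by nlinarith
  set A := 4 * (k : ℝ)^2 * (p - 1) + (n : ℝ)^2 * (p - 2)^2 with hA
  have hnp : (0:ℝ) ≤ n * p := by nlinarith
  have h1 : (n:ℝ) * p < Real.sqrt A := by
    rw [show ((n:ℝ) * p) = Real.sqrt ((n * p)^2) by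
      rw [Real.sqrt_sq hnp]]
    apply Real.sqrt_lt_sqrt (by positivity)
    nlinarith
  set c := ((k:ℝ)^2 - (n:ℝ)^2) / n with hcdef
  have hc : c * n = (k:ℝ)^2 - n^2 := div_mul_cancel₀ _ hn0.ne'
  have hcpos : 0 < c := div_pos (by linarith) hn0
  have h2 : Real.sqrt A < n * p + 2 * c := by
    rw [show ((n:ℝ) * p + 2 * c) = Real.sqrt ((n * p + 2 * c)^2) by
      rw [Real.sqrt_sq (by nlinarith)]]
    apply Real.sqrt_lt_sqrt
    · have : (0:ℝ) ≤ A := by nlinarith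
      exact this
    · nlinarith
  constructor
  · linarith
  · linarith
end

section
/- Let p > 1, n ≥ 1, k ≥ n+1, λ_k = (1/2)(√(4k²(p-1) + n²(p-2)²) − np) and ε_k = (λ_k + n − k)/(λ_k + n + k). Then |ε_k| < (k − n)/(k + n). -/
set_option maxHeartbeats 1000000 in
theorem eps_k_bound (p : ℝ) (n k : ℕ) (hp : 1 < p) (hn : 1 ≤ n) (hk : n + 1 ≤ k) :
    |(((Real.sqrt (4 * (k : ℝ)^2 * (p - 1) + (n : ℝ)^2 * (p - 2)^2) - n * p) / 2 + n - k) /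
      ((Real.sqrt (4 * (k : ℝ)^2 * (p - 1) + (n : ℝ)^2 * (p - 2)^2) - n * p) / 2 + n + k))|
      < ((k : ℝ) - n) / ((k : ℝ) + n) := by
  have hn' : (1:ℝ) ≤ (n:ℝ) := by exact_mod_cast hn
  have hk' : (n:ℝ) + 1 ≤ (k:ℝ) := by exact_mod_cast hk
  set s := Real.sqrt (4 * (k : ℝ)^2 * (p - 1) + (n : ℝ)^2 * (p - 2)^2) with hs
  have harg : 0 ≤ 4 * (k : ℝ)^2 * (p - 1) + (n : ℝ)^2 * (p - 2)^2 := by nlinarith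
  have hs2 : s^2 = 4 * (k : ℝ)^2 * (p - 1) + (n : ℝ)^2 * (p - 2)^2 := Real.sq_sqrt harg
  have hs0 : 0 ≤ s := Real.sqrt_nonneg _
  -- s > n p
  have h1 : (n:ℝ) * p < s := by
    refine lt_of_pow_lt_pow_left₀ 2 hs0 ?_
    rw [hs2]; nlinarith [mul_pos (sub_pos.mpr hp) (show (0:ℝ) < (k:ℝ)^2 - (n:ℝ)^2 by nlinarith)]
  -- s < 2k²/n + n(p-2), equivalently n*s < 2k² + n²(p-2)
  have hB : 0 ≤ 2*(k:ℝ)^2 + (n:ℝ)^2 * (p-2) := by nlinarith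
  have h2 : (n:ℝ) * s < 2*(k:ℝ)^2 + (n:ℝ)^2 * (p-2) := by
    refine lt_of_pow_lt_pow_left₀ 2 hB ?_
    have : ((n:ℝ) * s)^2 = (n:ℝ)^2 * s^2 := by ring
    rw [this, hs2]; nlinarith [mul_pos (show (0:ℝ) < (k:ℝ)^2 by nlinarith) (show (0:ℝ) < (k:ℝ)^2 - (n:ℝ)^2 by nlinarith)]
  set m : ℝ := (s - n * p) / 2 + n with hm
  have hnm : (n:ℝ) < m := by rw [hm]; nlinarith
  have hmk : m * n < (k:ℝ)^2 := by rw [hm]; nlinarith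
  have hmk0 : 0 < m + k := by nlinarith
  have hkn0 : 0 < (k:ℝ) + n := by nlinarith
  show |(m - k) / (m + k)| < ((k:ℝ) - n) / ((k:ℝ) + n)
  rw [abs_div, abs_of_pos hmk0, div_lt_div_iff₀ hmk0 hkn0]
  rcases abs_cases (m - (k:ℝ)) with ⟨h, _⟩ | ⟨h, _⟩ <;> rw [h] <;> nlinarith
end

section
/- Let p > 1, n ≥ 1, k ≥ n+1, λ_k = (1/2)(√(4k²(p-1) + n²(p-2)²) − np) and μ_k = λ_k/(λ_k + n + k). Then 0 ≤ μ_k < 1 − n/k. -/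
theorem mu_k_bounds (p : ℝ) (n k : ℕ) (hp : 1 < p) (hn : 1 ≤ n) (hk : n + 1 ≤ k) :
    0 ≤ ((Real.sqrt (4 * (k : ℝ)^2 * (p - 1) + (n : ℝ)^2 * (p - 2)^2) - n * p) / 2) /
        ((Real.sqrt (4 * (k : ℝ)^2 * (p - 1) + (n : ℝ)^2 * (p - 2)^2) - n * p) / 2 + n + k) ∧
    ((Real.sqrt (4 * (k : ℝ)^2 * (p - 1) + (n : ℝ)^2 * (p - 2)^2) - n * p) / 2) /
        ((Real.sqrt (4 * (k : ℝ)^2 * (p - 1) + (n : ℝ)^2 * (p - 2)^2) - n * p) / 2 + n + k)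
      < 1 - (n : ℝ) / k := by
  have hn' : (1:ℝ) ≤ (n:ℝ) := by exact_mod_cast hn
  have hk' : (n:ℝ) + 1 ≤ (k:ℝ) := by exact_mod_cast hk
  set S := Real.sqrt (4 * (k : ℝ)^2 * (p - 1) + (n : ℝ)^2 * (p - 2)^2) with hSdef
  have harg : 0 ≤ 4 * (k : ℝ)^2 * (p - 1) + (n : ℝ)^2 * (p - 2)^2 := by
    nlinarith [sq_nonneg (k:ℝ), sq_nonneg ((n:ℝ)*(p-2))]
  have hS0 : 0 ≤ S := Real.sqrt_nonneg _
  have hSsq : S ^ 2 = 4 * (k : ℝ)^2 * (p - 1) + (n : ℝ)^2 * (p - 2)^2 := Real.sq_sqrt harg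
  -- S > n*p
  have hkn : (n:ℝ)^2 < (k:ℝ)^2 := by nlinarith
  have hSnp : (n:ℝ) * p < S := by
    have h2 : ((n:ℝ) * p) ^ 2 < S ^ 2 := by
      nlinarith [mul_pos (sub_pos.2 hp) (by linarith : (0:ℝ) < (k:ℝ)^2 - (n:ℝ)^2)]
    exact lt_of_pow_lt_pow_left₀ 2 hS0 h2
  have hlam : 0 < (S - n * p) / 2 := by linarith
  have hD : 0 < (S - n * p) / 2 + n + k := by linarith
  have hk0 : (0:ℝ) < (k:ℝ) := by linarith
  constructor
  · positivity
  · have hupper : (n:ℝ) * S < (n:ℝ)^2 * p + 2 * ((k:ℝ)^2 - (n:ℝ)^2) := by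
      have h2 : ((n:ℝ) * S) ^ 2 < ((n:ℝ)^2 * p + 2 * ((k:ℝ)^2 - (n:ℝ)^2)) ^ 2 := by
        nlinarith [sq_nonneg ((k:ℝ)^2 - (n:ℝ)^2),
          mul_pos (by positivity : (0:ℝ) < (n:ℝ)^2) (by linarith : (0:ℝ) < (k:ℝ)^2 - (n:ℝ)^2)]
      have hb : 0 ≤ (n:ℝ)^2 * p + 2 * ((k:ℝ)^2 - (n:ℝ)^2) := by nlinarith
      exact lt_of_pow_lt_pow_left₀ 2 hb h2
    have heq : 1 - (n:ℝ) / k = ((k:ℝ) - n) / k := by field_simp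
    rw [heq, div_lt_div_iff₀ hD hk0]
    nlinarith [hupper]
end

section
/- Let p > 1 and n ≥ 1, and set λ = λ_{n+1} = (1/2)(√(4(n+1)²(p-1) + n²(p-2)²) − np). Then 0 < λ < 2 + 1/n. -/
theorem lambda_n_plus_one_bounds (p : ℝ) (n : ℕ) (hp : 1 < p) (hn : 1 ≤ n) :
    0 < (Real.sqrt (4 * ((n : ℝ) + 1)^2 * (p - 1) + (n : ℝ)^2 * (p - 2)^2) - n * p) / 2 ∧
    (Real.sqrt (4 * ((n : ℝ) + 1)^2 * (p - 1) + (n : ℝ)^2 * (p - 2)^2) - n * p) / 2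
      < 2 + 1 / (n : ℝ) := by
  have hn1 : (1 : ℝ) ≤ (n : ℝ) := by exact_mod_cast hn
  have hn0 : (0 : ℝ) < (n : ℝ) := by linarith
  set D : ℝ := 4 * ((n : ℝ) + 1)^2 * (p - 1) + (n : ℝ)^2 * (p - 2)^2 with hD
  have hnp : (0 : ℝ) ≤ (n : ℝ) * p := by nlinarith
  have hlow : (n : ℝ) * p < Real.sqrt D := by
    rw [show ((n : ℝ) * p) = Real.sqrt (((n : ℝ) * p) ^ 2) by
      rw [Real.sqrt_sq hnp]]
    apply Real.sqrt_lt_sqrt (by positivity)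
    nlinarith
  have hb : ((n : ℝ)) * (1 / (n : ℝ)) = 1 := by field_simp
  have hhigh : Real.sqrt D < (n : ℝ) * p + 4 + 2 * (1 / (n : ℝ)) := by
    rw [show ((n : ℝ) * p + 4 + 2 * (1 / (n : ℝ))) =
      Real.sqrt (((n : ℝ) * p + 4 + 2 * (1 / (n : ℝ))) ^ 2) by
        rw [Real.sqrt_sq (by positivity)]]
    apply Real.sqrt_lt_sqrt (by nlinarith [sq_nonneg ((n : ℝ) + 1), sq_nonneg (p - 2)])
    have h1 : (0 : ℝ) < 1 / (n : ℝ) := by positivity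
    nlinarith [sq_nonneg ((n : ℝ) * p), mul_pos hn0 h1]
  constructor
  · linarith
  · have : Real.sqrt D < (n : ℝ) * p + 2 * (2 + 1 / (n : ℝ)) := by
      rw [mul_add]; linarith
    linarith
end

section
/- Let p > 1 and n ≥ 1, and set λ = λ_{n+1} = (1/2)(√(4(n+1)²(p-1) + n²(p-2)²) − np) and ε = (λ + n − (n+1))/(λ + n + (n+1)). Then |ε| < 1/(2n+1). -/
theorem eps_n_plus_one_bound (p : ℝ) (n : ℕ) (hp : 1 < p) (hn : 1 ≤ n) :
    |(((Real.sqrt (4 * ((n : ℝ) + 1)^2 * (p - 1) + (n : ℝ)^2 * (p - 2)^2) - n * p) / 2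
        + n - (n + 1)) /
      ((Real.sqrt (4 * ((n : ℝ) + 1)^2 * (p - 1) + (n : ℝ)^2 * (p - 2)^2) - n * p) / 2
        + n + (n + 1)))|
      < 1 / (2 * (n : ℝ) + 1) := by
  have hn1 : (1:ℝ) ≤ (n:ℝ) := by exact_mod_cast hn
  set nn : ℝ := (n:ℝ) with hnn
  set D : ℝ := 4 * (nn + 1)^2 * (p - 1) + nn^2 * (p - 2)^2 with hD
  have hD0 : 0 ≤ D := by nlinarith [sq_nonneg (nn + 1), sq_nonneg (p - 2)]
  set s := Real.sqrt D with hsdef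
  have hs0 : 0 ≤ s := Real.sqrt_nonneg _
  have hs2 : s ^ 2 = D := Real.sq_sqrt hD0
  have h1 : nn * p < s := by
    nlinarith [sq_nonneg (s - nn * p), sq_nonneg (s + nn * p)]
  have h2 : nn * s < nn * (nn * p) + 4 * nn + 2 := by
    nlinarith [sq_nonneg (nn * s - (nn * (nn * p) + 4 * nn + 2)),
      sq_nonneg (nn * s + nn * (nn * p) + 4 * nn + 2), sq_nonneg nn]
  have h3 : (0:ℝ) < 2 * nn + 1 := by linarith
  have hM : 0 < (s - nn * p) / 2 + nn + (nn + 1) := by nlinarith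
  rw [abs_lt]
  constructor
  · rw [neg_lt, ← neg_div, div_lt_div_iff₀ hM h3]
    nlinarith
  · rw [div_lt_div_iff₀ hM h3]
    nlinarith
end

section
/- For every ρ > 0, every real t, and every positive integer k, |ρ e^{ikt} − 1| ≤ k |ρ e^{it} − 1|. -/
open Complex

/-!
For `‖z‖ = 1` and real `ρ`, `‖ρ z - 1‖² = (ρ - 1)² + ρ ‖z - 1‖²`: the radial and angular
contributions separate. The radial term is the same for `z` and `z ^ k`, while the angular one
grows at most by the factor `k` since `‖z ^ k - 1‖ ≤ k ‖z - 1‖`.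
-/

theorem norm_pow_sub_one_le {R : Type*} [SeminormedRing R] {z : R} (hz : ‖z‖ ≤ 1) (n : ℕ) :
    ‖z ^ n - 1‖ ≤ n * ‖z - 1‖ := by
  induction n with
  | zero => simp
  | succ n ih =>
    calc ‖z ^ (n + 1) - 1‖ = ‖z * (z ^ n - 1) + (z - 1)‖ := by rw [pow_succ']; noncomm_ring
      _ ≤ ‖z‖ * ‖z ^ n - 1‖ + ‖z - 1‖ :=
        (norm_add_le _ _).trans (by gcongr; exact norm_mul_le _ _)
      _ ≤ ‖z ^ n - 1‖ + ‖z - 1‖ := by gcongr; exact mul_le_of_le_one_left (norm_nonneg _) hz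
      _ ≤ (n + 1 : ℕ) * ‖z - 1‖ := by push_cast; linarith

theorem Complex.norm_ofReal_mul_sub_one_sq {z : ℂ} (hz : ‖z‖ = 1) (ρ : ℝ) :
    ‖(ρ : ℂ) * z - 1‖ ^ 2 = (ρ - 1) ^ 2 + ρ * ‖z - 1‖ ^ 2 := by
  have hz' : z.re * z.re + z.im * z.im = 1 := by
    rw [← normSq_apply, ← Complex.sq_norm, hz, one_pow]
  simp only [Complex.sq_norm, normSq_apply, sub_re, sub_im, re_ofReal_mul, im_ofReal_mul,
    one_re, one_im]
  linear_combination (ρ ^ 2 - ρ) * hz'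

theorem exp_power_ineq (ρ : ℝ) (hρ : 0 < ρ) (t : ℝ) (k : ℕ) (hk : 1 ≤ k) :
    ‖(ρ : ℂ) * Complex.exp ((k : ℝ) * t * Complex.I) - 1‖
      ≤ k * ‖(ρ : ℂ) * Complex.exp (t * Complex.I) - 1‖ := by
  set z := Complex.exp (t * Complex.I)
  have hz : ‖z‖ = 1 := norm_exp_ofReal_mul_I t
  have hzk : Complex.exp ((k : ℝ) * t * Complex.I) = z ^ k := by
    rw [← Complex.exp_nat_mul]; push_cast; ring_nf
  have hzk_norm : ‖z ^ k‖ = 1 := by rw [norm_pow, hz, one_pow]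
  have hradial : (ρ - 1) ^ 2 ≤ (k : ℝ) ^ 2 * (ρ - 1) ^ 2 :=
    le_mul_of_one_le_left (sq_nonneg _) (one_le_pow₀ (by exact_mod_cast hk))
  have hangular : ρ * ‖z ^ k - 1‖ ^ 2 ≤ ρ * ((k : ℝ) ^ 2 * ‖z - 1‖ ^ 2) := by
    rw [← mul_pow]; gcongr; exact norm_pow_sub_one_le hz.le k
  rw [hzk]
  refine (pow_le_pow_iff_left₀ (norm_nonneg _) (by positivity) two_ne_zero).mp ?_
  rw [mul_pow, norm_ofReal_mul_sub_one_sq hzk_norm, norm_ofReal_mul_sub_one_sq hz]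
  linarith
end

section
/- Let λ > 0 and Λ > 1. There exists a constant C = C(λ, Λ) > 0 such that for all ρ with Λ^{-1} ≤ ρ ≤ Λ and all real t, |ρ^λ e^{it} − 1| ≥ C ρ^{λ−1} |ρ e^{it} − 1|. -/
/-!
Since `‖a w - 1‖² = (a - 1)² + a ‖w - 1‖²` for real `a` and `‖w‖ = 1`, it suffices to compare the
two terms separately for `a = ρ ^ λ` and `a = ρ`. The radial terms are compared by the mean value
theorem, since `x ↦ x ^ λ` has derivative bounded below on `[Λ⁻¹, Λ]`; the angular terms are
compared because `ρ ^ λ = ρ ^ (λ - 1) * ρ` with `ρ ^ (λ - 1)` bounded below on `[Λ⁻¹, Λ]`.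
-/

open Complex Set

theorem norm_ofReal_mul_sub_one_sq (a : ℝ) {w : ℂ} (hw : ‖w‖ = 1) :
    ‖(a : ℂ) * w - 1‖ ^ 2 = (a - 1) ^ 2 + a * ‖w - 1‖ ^ 2 := by
  have hw2 : w.re * w.re + w.im * w.im = 1 := by
    rw [← normSq_apply, ← Complex.sq_norm, hw, one_pow]
  simp only [Complex.sq_norm, normSq_apply, sub_re, sub_im, re_ofReal_mul, im_ofReal_mul, one_re,
    one_im]
  linear_combination (a ^ 2 - a) * hw2

theorem le_norm_ofReal_mul_sub_one {a b k : ℝ} {w : ℂ} (hk : 0 ≤ k) (hw : ‖w‖ = 1)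
    (h_radial : k * |b - 1| ≤ |a - 1|) (h_angular : k ^ 2 * b ≤ a) :
    k * ‖(b : ℂ) * w - 1‖ ≤ ‖(a : ℂ) * w - 1‖ := by
  refine (pow_le_pow_iff_left₀ (by positivity) (norm_nonneg _) two_ne_zero).mp ?_
  have h_radial_sq : k ^ 2 * (b - 1) ^ 2 ≤ (a - 1) ^ 2 := by
    simpa only [mul_pow, sq_abs] using pow_le_pow_left₀ (by positivity) h_radial 2
  rw [mul_pow, norm_ofReal_mul_sub_one_sq a hw, norm_ofReal_mul_sub_one_sq b hw]
  nlinarith [mul_le_mul_of_nonneg_right h_angular (sq_nonneg ‖w - 1‖)]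

theorem rpow_mem_Icc_of_mem_Icc_inv {Λ x : ℝ} (hΛ : 0 < Λ) (hx : x ∈ Icc Λ⁻¹ Λ) (μ : ℝ) :
    x ^ μ ∈ Icc (Λ ^ |μ|)⁻¹ (Λ ^ |μ|) := by
  have hx0 : 0 < x := (inv_pos.2 hΛ).trans_le hx.1
  have hlog : |Real.log x| ≤ Real.log Λ := abs_le.2
    ⟨by simpa only [Real.log_inv] using Real.log_le_log (inv_pos.2 hΛ) hx.1,
      Real.log_le_log hx0 hx.2⟩
  obtain ⟨h_lower, h_upper⟩ := abs_le.1 <| show |Real.log x * μ| ≤ Real.log Λ * |μ| by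
    rw [abs_mul]; exact mul_le_mul_of_nonneg_right hlog (abs_nonneg μ)
  rw [Real.rpow_def_of_pos hx0, Real.rpow_def_of_pos hΛ, ← Real.exp_neg]
  exact ⟨Real.exp_le_exp.2 h_lower, Real.exp_le_exp.2 h_upper⟩

theorem div_rpow_abs_mul_abs_sub_le_abs_rpow_sub {Λ lam x y : ℝ} (hΛ : 0 < Λ) (hlam : 0 < lam)
    (hx : x ∈ Icc Λ⁻¹ Λ) (hy : y ∈ Icc Λ⁻¹ Λ) :
    lam / Λ ^ |lam - 1| * |y - x| ≤ |y ^ lam - x ^ lam| := by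
  wlog hxy : x ≤ y generalizing x y
  · rw [abs_sub_comm y, abs_sub_comm (y ^ lam)]
    exact this hy hx (le_of_not_ge hxy)
  have hpos : ∀ z ∈ Icc Λ⁻¹ Λ, 0 < z := fun z hz => (inv_pos.2 hΛ).trans_le hz.1
  have h_deriv : ∀ z ∈ interior (Icc Λ⁻¹ Λ), lam / Λ ^ |lam - 1| ≤ deriv (· ^ lam) z := by
    intro z hz
    have hz' := interior_subset hz
    rw [Real.deriv_rpow_const, div_eq_mul_inv]
    exact mul_le_mul_of_nonneg_left (rpow_mem_Icc_of_mem_Icc_inv hΛ hz' _).1 hlam.le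
  have h_mvt := (convex_Icc Λ⁻¹ Λ).mul_sub_le_image_sub_of_le_deriv
    (fun z hz => (Real.continuousAt_rpow_const z lam (Or.inl (hpos z hz).ne')).continuousWithinAt)
    (fun z hz => (Real.differentiableAt_rpow_const_of_ne lam
      (hpos z (interior_subset hz)).ne').differentiableWithinAt) h_deriv x hx y hy hxy
  rwa [abs_of_nonneg (sub_nonneg.2 hxy),
    abs_of_nonneg (sub_nonneg.2 (Real.rpow_le_rpow (hpos x hx).le hxy hlam.le))]

theorem rpow_exp_lower_bound (lam Lam : ℝ) (hlam : 0 < lam) (hLam : 1 < Lam) :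
    ∃ C : ℝ, 0 < C ∧ ∀ (ρ t : ℝ), Lam⁻¹ ≤ ρ → ρ ≤ Lam →
      ‖(↑(ρ ^ lam) : ℂ) * Complex.exp (t * Complex.I) - 1‖
        ≥ C * ρ ^ (lam - 1) * ‖(ρ : ℂ) * Complex.exp (t * Complex.I) - 1‖ := by
  have hLam0 : 0 < Lam := zero_lt_one.trans hLam
  set K := Lam ^ |lam - 1|
  have hK : 1 ≤ K := Real.one_le_rpow hLam.le (abs_nonneg _)
  refine ⟨min lam 1 / K ^ 2, by positivity, fun ρ t h1 h2 => ?_⟩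
  have hρ : ρ ∈ Icc Lam⁻¹ Lam := ⟨h1, h2⟩
  have hρ0 : 0 < ρ := (inv_pos.2 hLam0).trans_le h1
  have hone : (1 : ℝ) ∈ Icc Lam⁻¹ Lam := ⟨inv_le_one_of_one_le₀ hLam.le, hLam.le⟩
  obtain ⟨hK_lower, hK_upper⟩ := rpow_mem_Icc_of_mem_Icc_inv hLam0 hρ (lam - 1)
  have h_factor : min lam 1 / K ^ 2 * ρ ^ (lam - 1) ≤ min lam 1 / K := by
    calc min lam 1 / K ^ 2 * ρ ^ (lam - 1) ≤ min lam 1 / K ^ 2 * K := by gcongr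
      _ = min lam 1 / K := by field_simp
  apply le_norm_ofReal_mul_sub_one (by positivity) (norm_exp_ofReal_mul_I t)
  · calc min lam 1 / K ^ 2 * ρ ^ (lam - 1) * |ρ - 1| ≤ lam / K * |ρ - 1| := by
          gcongr; exact h_factor.trans (by gcongr; exact min_le_left _ _)
      _ ≤ |ρ ^ lam - 1| := by
          simpa only [Real.one_rpow] using
            div_rpow_abs_mul_abs_sub_le_abs_rpow_sub hLam0 hlam hone hρ
  · calc (min lam 1 / K ^ 2 * ρ ^ (lam - 1)) ^ 2 * ρ ≤ (1 / K) ^ 2 * ρ := by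
          gcongr; exact h_factor.trans (by gcongr; exact min_le_right _ _)
      _ ≤ K⁻¹ * ρ := by
          gcongr; rw [one_div, sq]
          exact mul_le_of_le_one_right (by positivity) (inv_le_one_of_one_le₀ hK)
      _ ≤ ρ ^ (lam - 1) * ρ := by gcongr
      _ = ρ ^ lam := by rw [← Real.rpow_add_one hρ0.ne', sub_add_cancel]
end

section
/- Let n ≥ 1 be an integer, λ > 0, A ∈ ℂ nonzero, and ε ∈ ℂ with (2n+1)|ε| < 1. Define 𝔄(ξ) = [A (ξ/|ξ|)^{n+1} + ε \overline{A} (\overline{ξ}/|ξ|)^{n+1}] (ξ/|ξ|)^{-n} |ξ|^λ for ξ ≠ 0 and 𝔄(0) = 0. Then for all ξ, ζ ∈ ℂ, |𝔄(ξ) − 𝔄(ζ)| ≥ (1 − (2n+1)|ε|)|A| · | |ξ|^{λ−1} ξ − |ζ|^{λ−1} ζ |. -/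
open Complex

/-- The leading term `𝔄` of the hodographic representation. -/
noncomputable def frakA (n : ℕ) (lam : ℝ) (A ε : ℂ) (ξ : ℂ) : ℂ :=
  if ξ = 0 then 0 else
    (A * (ξ / (‖ξ‖ : ℝ)) ^ (n + 1) +
        ε * (starRingEnd ℂ) A * ((starRingEnd ℂ) ξ / (‖ξ‖ : ℝ)) ^ (n + 1)) *
      (ξ / (‖ξ‖ : ℝ)) ^ (-(n : ℤ)) * ((‖ξ‖ ^ lam : ℝ) : ℂ)

open ComplexConjugate

/-! With `w = |ξ|^(λ-1) ξ` one has `𝔄(ξ) = A w + ε Ā conj (K w)`, where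
`K (r e^{iθ}) = r e^{i(2n+1)θ}` (this is `angularPow (2n+1)`). The map `K` is `(2n+1)`-Lipschitz: for unit `a, b` and `r, s ≥ 0`,
`|r a - s b|² = (r - s)² + r s |a - b|²`, and `|a^m - b^m| ≤ m |a - b|`. Hence the `ε`-term moves
`A w` by at most `(2n+1) |ε| |A| |w - w'|`, and the reverse triangle inequality gives the bound. -/

theorem norm_pow_sub_pow_le_of_norm_le_one {R : Type*} [SeminormedCommRing R] [NormOneClass R]
    (m : ℕ) {a b : R} (ha : ‖a‖ ≤ 1) (hb : ‖b‖ ≤ 1) :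
    ‖a ^ m - b ^ m‖ ≤ m * ‖a - b‖ := by
  have h_geom : ‖∑ i ∈ Finset.range m, a ^ i * b ^ (m - 1 - i)‖ ≤ m :=
    calc ‖∑ i ∈ Finset.range m, a ^ i * b ^ (m - 1 - i)‖
        ≤ ∑ i ∈ Finset.range m, ‖a ^ i * b ^ (m - 1 - i)‖ := norm_sum_le _ _
      _ ≤ ∑ _i ∈ Finset.range m, (1 : ℝ) := by
        gcongr with i
        exact (norm_mul_le _ _).trans <| mul_le_one₀
          ((norm_pow_le a i).trans (pow_le_one₀ (norm_nonneg a) ha)) (norm_nonneg _)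
          ((norm_pow_le b _).trans (pow_le_one₀ (norm_nonneg b) hb))
      _ = m := by simp
  rw [← geom_sum₂_mul]
  exact (norm_mul_le _ _).trans (by gcongr)

theorem norm_smul_sub_smul_sq_of_norm_eq_one {F : Type*} [NormedAddCommGroup F]
    [InnerProductSpace ℝ F] (r s : ℝ) {a b : F} (ha : ‖a‖ = 1) (hb : ‖b‖ = 1) :
    ‖r • a - s • b‖ ^ 2 = (r - s) ^ 2 + r * s * ‖a - b‖ ^ 2 := by
  rw [norm_sub_sq_real, norm_sub_sq_real, norm_smul, norm_smul, real_inner_smul_left,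
    real_inner_smul_right, ha, hb, Real.norm_eq_abs, Real.norm_eq_abs, mul_pow, mul_pow, sq_abs,
    sq_abs]
  ring

theorem norm_ofReal_mul_pow_sub_le {m : ℕ} (hm : 1 ≤ m) {r s : ℝ} (hr : 0 ≤ r) (hs : 0 ≤ s)
    {a b : ℂ} (ha : ‖a‖ = 1) (hb : ‖b‖ = 1) :
    ‖(r : ℂ) * a ^ m - s * b ^ m‖ ≤ m * ‖(r : ℂ) * a - s * b‖ := by
  have hm1 : (1 : ℝ) ≤ (m : ℝ) ^ 2 := one_le_pow₀ (by exact_mod_cast hm)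
  refine le_of_pow_le_pow_left₀ two_ne_zero (by positivity) ?_
  simp only [← real_smul, mul_pow]
  rw [norm_smul_sub_smul_sq_of_norm_eq_one r s (by simp [ha]) (by simp [hb]),
    norm_smul_sub_smul_sq_of_norm_eq_one r s ha hb]
  have h_pow := norm_pow_sub_pow_le_of_norm_le_one m ha.le hb.le
  calc (r - s) ^ 2 + r * s * ‖a ^ m - b ^ m‖ ^ 2
      ≤ (r - s) ^ 2 + r * s * (m * ‖a - b‖) ^ 2 := by gcongr
    _ ≤ m ^ 2 * ((r - s) ^ 2 + r * s * ‖a - b‖ ^ 2) := by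
      nlinarith [mul_nonneg hr hs, sq_nonneg (r - s), sq_nonneg ‖a - b‖]

noncomputable def angularPow (m : ℕ) (w : ℂ) : ℂ := ‖w‖ * (w / ‖w‖) ^ m

theorem angularPow_eq_norm_mul_exp_arg (m : ℕ) (w : ℂ) :
    angularPow m w = ‖w‖ * exp (arg w * I) ^ m := by
  rcases eq_or_ne w 0 with rfl | hw
  · simp [angularPow]
  · rw [angularPow]
    congr 2
    rw [div_eq_iff (by simpa using hw), mul_comm, norm_mul_exp_arg_mul_I]

theorem lipschitzWith_angularPow {m : ℕ} (hm : 1 ≤ m) : LipschitzWith m (angularPow m) := by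
  refine LipschitzWith.of_dist_le_mul fun w v => ?_
  simp only [dist_eq_norm, angularPow_eq_norm_mul_exp_arg, NNReal.coe_natCast]
  conv_rhs => rw [← norm_mul_exp_arg_mul_I w, ← norm_mul_exp_arg_mul_I v]
  exact norm_ofReal_mul_pow_sub_le hm (norm_nonneg w) (norm_nonneg v)
    (norm_exp_ofReal_mul_I _) (norm_exp_ofReal_mul_I _)

theorem angularPow_ofReal_mul {t : ℝ} (ht : 0 < t) {u : ℂ} (hu : ‖u‖ = 1) (m : ℕ) :
    angularPow m (t * u) = t * u ^ m := by
  have ht' : (t : ℂ) ≠ 0 := by exact_mod_cast ht.ne'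
  rw [angularPow, norm_mul, hu, mul_one, norm_real, Real.norm_of_nonneg ht.le,
    mul_div_cancel_left₀ u ht']

theorem frakA_eq_mul_add_conj_angularPow (n : ℕ) (lam : ℝ) (A ε ξ : ℂ) :
    frakA n lam A ε ξ =
      A * (((‖ξ‖ ^ (lam - 1) : ℝ) : ℂ) * ξ) +
        ε * conj A * conj (angularPow (2 * n + 1) (((‖ξ‖ ^ (lam - 1) : ℝ) : ℂ) * ξ)) := by
  rcases eq_or_ne ξ 0 with rfl | hξ
  · simp [frakA, angularPow]
  have hr : 0 < ‖ξ‖ := norm_pos_iff.mpr hξ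
  set u := ξ / (‖ξ‖ : ℂ) with hu_def
  have hu : ‖u‖ = 1 := by simp [u, hr.ne']
  have hu0 : u ≠ 0 := by rintro h; simp [h] at hu
  have h_scale : ((‖ξ‖ ^ (lam - 1) : ℝ) : ℂ) * ξ = ((‖ξ‖ ^ lam : ℝ) : ℂ) * u := by
    rw [Real.rpow_sub_one hr.ne', hu_def]
    push_cast
    field_simp
  have h_conj : conj ξ / (‖ξ‖ : ℂ) = u⁻¹ := by
    rw [inv_eq_conj hu, hu_def, map_div₀, conj_ofReal]
  rw [frakA, if_neg hξ, ← hu_def, h_conj, zpow_neg, zpow_natCast, h_scale,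
    angularPow_ofReal_mul (by positivity) hu, map_mul, map_pow, conj_ofReal, ← inv_eq_conj hu]
  simp only [inv_pow]
  field_simp
  ring

theorem frakA_quantitative_injectivity_general (n : ℕ) (lam : ℝ) (A ε : ℂ) :
    ∀ ξ ζ : ℂ,
      ‖frakA n lam A ε ξ - frakA n lam A ε ζ‖
        ≥ (1 - (2 * (n : ℝ) + 1) * ‖ε‖) * ‖A‖ *
            ‖(((‖ξ‖ ^ (lam - 1) : ℝ) : ℂ) * ξ -
              ((‖ζ‖ ^ (lam - 1) : ℝ) : ℂ) * ζ)‖ := by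
  intro ξ ζ
  rw [frakA_eq_mul_add_conj_angularPow, frakA_eq_mul_add_conj_angularPow]
  set x := ((‖ξ‖ ^ (lam - 1) : ℝ) : ℂ) * ξ
  set y := ((‖ζ‖ ^ (lam - 1) : ℝ) : ℂ) * ζ
  set K := angularPow (2 * n + 1)
  have h_lip : ‖K x - K y‖ ≤ (2 * n + 1) * ‖x - y‖ := by
    simpa [dist_eq_norm] using
      (lipschitzWith_angularPow (by omega : 1 ≤ 2 * n + 1)).dist_le_mul x y
  calc (1 - (2 * (n : ℝ) + 1) * ‖ε‖) * ‖A‖ * ‖x - y‖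
      = ‖A * (x - y)‖ - ‖ε‖ * ‖A‖ * ((2 * n + 1) * ‖x - y‖) := by rw [norm_mul]; ring
    _ ≤ ‖A * (x - y)‖ - ‖ε * conj A * conj (K x - K y)‖ := by
      simp only [norm_mul, norm_conj]
      gcongr
    _ ≤ ‖A * (x - y) + ε * conj A * conj (K x - K y)‖ := norm_sub_le_norm_add _ _
    _ = _ := by rw [map_sub]; congr 1; ring

theorem frakA_quantitative_injectivity (n : ℕ) (lam : ℝ) (A ε : ℂ)
    (hn : 1 ≤ n) (hlam : 0 < lam) (hA : A ≠ 0) (hε : (2 * (n : ℝ) + 1) * ‖ε‖ < 1) :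
    ∀ ξ ζ : ℂ,
      ‖frakA n lam A ε ξ - frakA n lam A ε ζ‖
        ≥ (1 - (2 * (n : ℝ) + 1) * ‖ε‖) * ‖A‖ *
            ‖(((‖ξ‖ ^ (lam - 1) : ℝ) : ℂ) * ξ -
              ((‖ζ‖ ^ (lam - 1) : ℝ) : ℂ) * ζ)‖ :=
  frakA_quantitative_injectivity_general n lam A ε
end

section
/- Let n ≥ 1, λ > 0, and A = 1, ε real with (2n+1)|ε| < 1, and define 𝔄(re^{iθ}) = r^λ e^{-inθ}(e^{i(n+1)θ} + ε e^{-i(n+1)θ}) for r ≥ 0, with 𝔄(0) = 0. Then 𝔄 : ℂ → ℂ is surjective. -/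
/-!
For `r > 0`, `𝔄(r e^{iθ}) = r^λ e^{iθ} (1 + ε e^{-2i(n+1)θ})`. Since `|ε| < 1` the second factor
stays in the slit plane, so `θ + arg (1 + ε e^{-2i(n+1)θ})` is a continuous lift of the argument of
`𝔄(e^{iθ})` gaining exactly `2π` over `[0, 2π]`; by the intermediate value theorem every argument
is attained, and `r^λ` then adjusts the modulus.
-/

open Complex

open Real ComplexConjugate

theorem frakA_ofReal_mul {r : ℝ} (hr : 0 < r) {z : ℂ} (hz : ‖z‖ = 1) (n : ℕ) (lam : ℝ) (A ε : ℂ) :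
    frakA n lam A ε (r * z) = (r ^ lam : ℝ) * (z * (A + ε * conj A * z⁻¹ ^ (2 * n + 2))) := by
  have hz0 : z ≠ 0 := norm_ne_zero_iff.1 (by simp [hz])
  have hr0 : (r : ℂ) ≠ 0 := ofReal_ne_zero.2 hr.ne'
  have hnorm : ‖(r : ℂ) * z‖ = r := by
    rw [norm_mul, hz, norm_real, Real.norm_of_nonneg hr.le, mul_one]
  rw [frakA, if_neg (mul_ne_zero hr0 hz0), hnorm, map_mul, conj_ofReal, ← inv_eq_conj hz,
    mul_div_cancel_left₀ _ hr0, mul_div_cancel_left₀ _ hr0,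
    zpow_neg, zpow_natCast, inv_pow, inv_pow]
  field_simp
  ring

theorem exists_arg_exp_mul_I_mul_eq {u : ℝ → ℂ} (hu : Continuous u) (hslit : ∀ θ, u θ ∈ slitPlane)
    (hper : u (2 * π) = u 0) (w : ℂ) : ∃ θ : ℝ, arg (exp (θ * I) * u θ) = arg w := by
  set f : ℝ → ℝ := fun θ => θ + arg (u θ)
  have hf : Continuous f :=
    continuous_id.add <| continuous_iff_continuousAt.2 fun θ =>
      (continuousAt_arg (hslit θ)).comp hu.continuousAt
  have hf2π : f (2 * π) = f 0 + 2 * π := by simp only [f, hper]; ring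
  obtain ⟨θ, -, hθ⟩ : toIcoMod two_pi_pos (f 0) (arg w) ∈ f '' Set.Icc 0 (2 * π) := by
    refine intermediate_value_Icc two_pi_pos.le hf.continuousOn ?_
    rw [hf2π]
    exact Set.Ico_subset_Icc_self (toIcoMod_mem_Ico _ _ _)
  refine ⟨θ, arg_coe_angle_eq_iff.1 ?_⟩
  rw [arg_mul_coe_angle (exp_ne_zero _) (slitPlane_ne_zero (hslit θ)), arg_exp_mul_I,
    Angle.coe_toIocMod, ← Angle.coe_add, ← Angle.coe_toIcoMod (arg w) (f 0), ← hθ]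

theorem frakA_surjective_general (n : ℕ) (lam : ℝ) (ε : ℝ)
    (hlam : 0 < lam) (hε : (2 * (n : ℝ) + 1) * |ε| < 1) :
    Function.Surjective (frakA n lam 1 (ε : ℂ)) := by
  intro w
  rcases eq_or_ne w 0 with rfl | hw
  · exact ⟨0, if_pos rfl⟩
  have hε1 : ‖(ε : ℂ)‖ < 1 := by
    rw [norm_real, Real.norm_eq_abs]
    have h1 : 1 ≤ 2 * (n : ℝ) + 1 := by linarith [n.cast_nonneg (α := ℝ)]
    exact (le_mul_of_one_le_left (abs_nonneg ε) h1).trans_lt hε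
  set u : ℝ → ℂ := fun θ => 1 + ε * conj 1 * (exp (θ * I))⁻¹ ^ (2 * n + 2)
  have hu : Continuous u := by fun_prop (disch := exact fun _ => exp_ne_zero _)
  have hslit : ∀ θ, u θ ∈ slitPlane := fun θ =>
    mem_slitPlane_of_norm_lt_one (by simpa [norm_exp_ofReal_mul_I] using hε1)
  have hper : u (2 * π) = u 0 := by simp [u, exp_two_pi_mul_I]
  obtain ⟨θ, hθ⟩ := exists_arg_exp_mul_I_mul_eq hu hslit hper w
  have hv : exp (θ * I) * u θ ≠ 0 := mul_ne_zero (exp_ne_zero _) (slitPlane_ne_zero (hslit θ))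
  have ht : 0 < ‖w‖ / ‖exp (θ * I) * u θ‖ := div_pos (norm_pos_iff.2 hw) (norm_pos_iff.2 hv)
  refine ⟨((‖w‖ / ‖exp (θ * I) * u θ‖) ^ lam⁻¹ : ℝ) * exp (θ * I), ?_⟩
  rw [frakA_ofReal_mul (rpow_pos_of_pos ht _) (norm_exp_ofReal_mul_I θ), ← rpow_mul ht.le,
    inv_mul_cancel₀ hlam.ne', rpow_one, ofReal_div]
  exact (arg_eq_arg_iff hv hw).1 hθ

theorem frakA_surjective (n : ℕ) (lam : ℝ) (ε : ℝ)
    (hn : 1 ≤ n) (hlam : 0 < lam) (hε : (2 * (n : ℝ) + 1) * |ε| < 1) :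
    Function.Surjective (frakA n lam 1 (ε : ℂ)) :=
  frakA_surjective_general n lam ε hlam hε
end

section
/- For every p > 1 and every integer n ≥ 1, with λ_k = (1/2)(√(4k²(p-1) + n²(p-2)²) − np), the inequality (n + λ_{n+2})/λ_{n+1} > 2 holds. -/
set_option maxHeartbeats 1000000

theorem exponent_inequality (p : ℝ) (n : ℕ) (hp : 1 < p) (hn : 1 ≤ n) :
    ((n : ℝ) + (Real.sqrt (4 * ((n : ℝ) + 2)^2 * (p - 1) + (n : ℝ)^2 * (p - 2)^2) - n * p) / 2) /
      ((Real.sqrt (4 * ((n : ℝ) + 1)^2 * (p - 1) + (n : ℝ)^2 * (p - 2)^2) - n * p) / 2) > 2 := by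
  have hn1 : (1 : ℝ) ≤ (n : ℝ) := by exact_mod_cast hn
  set m : ℝ := (n : ℝ) with hm
  have hm0 : (0:ℝ) < m := by linarith
  have hA : (0:ℝ) ≤ 4 * (m + 1)^2 * (p - 1) + m^2 * (p - 2)^2 := by nlinarith [sq_nonneg (m+1), sq_nonneg (p-2)]
  have hB : (0:ℝ) ≤ 4 * (m + 2)^2 * (p - 1) + m^2 * (p - 2)^2 := by nlinarith [sq_nonneg (m+2), sq_nonneg (p-2)]
  set a := Real.sqrt (4 * (m + 1)^2 * (p - 1) + m^2 * (p - 2)^2) with hadef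
  set b := Real.sqrt (4 * (m + 2)^2 * (p - 1) + m^2 * (p - 2)^2) with hbdef
  have ha0 : 0 ≤ a := Real.sqrt_nonneg _
  have hb0 : 0 ≤ b := Real.sqrt_nonneg _
  have ha2 : a^2 = 4 * (m + 1)^2 * (p - 1) + m^2 * (p - 2)^2 := Real.sq_sqrt hA
  have hb2 : b^2 = 4 * (m + 2)^2 * (p - 1) + m^2 * (p - 2)^2 := Real.sq_sqrt hB
  have hmp : 0 < m * p := by nlinarith
  have hanp : m * p < a := by nlinarith [sq_nonneg (a - m*p)]
  have hbnp : m * p < b := by nlinarith [sq_nonneg (b - m*p)]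
  -- Key: m(p+2)b > R where R = m^2(p^2-2p-2) + 8m(p-1)
  have hS : 0 < m*(p+2)*b + (m^2*(p^2-2*p-2) + 8*m*(p-1)) := by
    have h1 : m*(p+2)*(m*p) < m*(p+2)*b :=
      mul_lt_mul_of_pos_left hbnp (mul_pos hm0 (by linarith : (0:ℝ) < p+2))
    have h2 : 0 < m*m*(2*p^2-2) := by
      apply mul_pos (mul_pos hm0 hm0); nlinarith
    have h3 : 0 < m*(p-1) := mul_pos hm0 (by linarith)
    nlinarith [h1, h2, h3]
  have hP : (m*(p+2)*b - (m^2*(p^2-2*p-2) + 8*m*(p-1))) *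
      (m*(p+2)*b + (m^2*(p^2-2*p-2) + 8*m*(p-1))) =
      m^2*(p-1)*(4*m^2*(2*p+1)*(p+1) + 96*m*(p+1) + 16*(p^2+8)) := by
    linear_combination (m^2*(p+2)^2) * hb2
  have hPpos : 0 < m^2*(p-1)*(4*m^2*(2*p+1)*(p+1) + 96*m*(p+1) + 16*(p^2+8)) := by
    apply mul_pos (mul_pos (pow_pos hm0 2) (by linarith))
    nlinarith [sq_nonneg m, sq_nonneg p]
  have hD : 0 < m*(p+2)*b - (m^2*(p^2-2*p-2) + 8*m*(p-1)) := by
    by_contra h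
    push_neg at h
    nlinarith [hP, hS, hPpos]
  have hsq : (2*a)^2 < (b + m*(p+2))^2 := by nlinarith [hD, hb2, ha2]
  have hkey : 2*a < b + m*(p+2) :=
    lt_of_pow_lt_pow_left₀ 2 (by nlinarith : (0:ℝ) ≤ b + m*(p+2)) hsq
  have hY : (0:ℝ) < (a - m * p) / 2 := by linarith
  rw [gt_iff_lt, lt_div_iff₀ hY]
  linarith
end

section
/- For every real p > 1, (p+2)√(p² + 32(p−1)) > p² + 6p − 10. -/
theorem sqrt_inequality_n_one (p : ℝ) (hp : 1 < p) :
    (p + 2) * Real.sqrt (p^2 + 32 * (p - 1)) > p^2 + 6 * p - 10 := by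
  have hx : (0:ℝ) ≤ p^2 + 32 * (p - 1) := by nlinarith
  have hs := Real.sq_sqrt hx
  have hs0 := Real.sqrt_nonneg (p^2 + 32 * (p - 1))
  set s := Real.sqrt (p^2 + 32 * (p - 1)) with hsdef
  nlinarith [sq_nonneg (s - p - 2), sq_nonneg ((p+2)*s - (p^2 + 6*p - 10)), sq_nonneg (p-1), mul_nonneg (by linarith : (0:ℝ) ≤ p + 2) hs0]
end

section
/- Let u : D → ℝ be a C² function on a planar domain and x ∈ D with ∇u(x) ≠ 0. Then lim_{r→0} (1/r²) [ (1/2)(sup_{B(x,r)} u + inf_{B(x,r)} u) − u(x) ] = Δ_∞ u(x) / (2|∇u(x)|²), where Δ_∞ u = Σ_{i,j} u_{x_i x_j} u_{x_i} u_{x_j}. -/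
/-!
Let `p = ∇u(x) ≠ 0`, `ν = p / ‖p‖` and `B = D²u(x)`. By Taylor's theorem
`u (x + h) = u x + ⟪p, h⟫ + B h h / 2 + o(r²)` on the ball of radius `r`, so it suffices to
understand the quadratic model there. Its maximum is attained at `h = r ν` up to `O(r³)`:
if `⟪ν, h⟫ = r - d` then `‖h - r ν‖² ≤ 2 r d`, so leaving `r ν` costs `‖p‖ d` in the linear
term and gains at most `‖B‖ r ‖h - r ν‖` in the quadratic one. Hence
`sup_{B(x,r)} u = u x + r ‖p‖ + r² B ν ν / 2 + o(r²)`. The same expansion for `-u` gives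
`inf_{B(x,r)} u = u x - r ‖p‖ + r² B ν ν / 2 + o(r²)`, and the first-order terms cancel in the
midrange.
-/

open Metric Filter Set Topology Asymptotics
open scoped InnerProductSpace Gradient

section Normed

variable {E F : Type*} [NormedAddCommGroup E] [NormedSpace ℝ E] [NormedAddCommGroup F]
  [NormedSpace ℝ F]

theorem ContinuousLinearMap.norm_apply_self_sub_apply_self_le (B : E →L[ℝ] E →L[ℝ] F)
    (h k : E) : ‖B h h - B k k‖ ≤ ‖B‖ * (‖h‖ + ‖k‖) * ‖h - k‖ := by
  have hsplit : B h h - B k k = B (h - k) h + B k (h - k) := by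
    simp only [map_sub, sub_apply]
    abel
  calc ‖B h h - B k k‖ ≤ ‖B‖ * ‖h - k‖ * ‖h‖ + ‖B‖ * ‖k‖ * ‖h - k‖ := by
        rw [hsplit]
        exact (norm_add_le _ _).trans (add_le_add (B.le_opNorm₂ _ _) (B.le_opNorm₂ _ _))
    _ = ‖B‖ * (‖h‖ + ‖k‖) * ‖h - k‖ := by ring

theorem isLittleO_second_order_taylor {f : E → F} {x : E} {B : E →L[ℝ] E →L[ℝ] F}
    (hf : ∀ᶠ y in 𝓝 x, DifferentiableAt ℝ f y) (hB : HasFDerivAt (fderiv ℝ f) B x) :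
    (fun h => f (x + h) - f x - fderiv ℝ f x h - (2 : ℝ)⁻¹ • B h h) =o[𝓝 0]
      fun h => ‖h‖ ^ 2 := by
  refine isLittleO_iff.mpr fun c hc => ?_
  have hnear : ∀ᶠ h in 𝓝 (0 : E), DifferentiableAt ℝ f (x + h) ∧
      ‖fderiv ℝ f (x + h) - fderiv ℝ f x - B h‖ ≤ c * ‖h‖ := by
    have hshift : Tendsto (x + ·) (𝓝 (0 : E)) (𝓝 x) := by
      simpa using (continuous_const_add x).tendsto (0 : E)
    exact (hshift.eventually hf).and ((hasFDerivAt_iff_isLittleO_nhds_zero.mp hB).def hc)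
  obtain ⟨δ, hδ, hball⟩ := Metric.eventually_nhds_iff_ball.mp hnear
  filter_upwards [Metric.ball_mem_nhds 0 hδ] with h hh
  have hseg : ∀ t ∈ Icc (0 : ℝ) 1, t • h ∈ Metric.ball (0 : E) δ := fun t ht =>
    (convex_ball 0 δ).smul_mem_of_zero_mem (Metric.mem_ball_self hδ) hh ht
  have hderiv : ∀ t ∈ Icc (0 : ℝ) 1, HasDerivWithinAt
      (fun t : ℝ => f (x + t • h) - t • fderiv ℝ f x h - (t ^ 2 / 2) • B h h)
      ((fderiv ℝ f (x + t • h) - fderiv ℝ f x - B (t • h)) h) (Icc 0 1) t := by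
    intro t ht
    have hline : HasDerivAt (fun t : ℝ => x + t • h) h t := by
      simpa using ((hasDerivAt_id t).smul_const h).const_add x
    have h1 := (hball _ (hseg t ht)).1.hasFDerivAt.comp_hasDerivAt t hline
    have h2 := (hasDerivAt_id t).smul_const (fderiv ℝ f x h)
    have h3 := ((hasDerivAt_pow 2 t).div_const 2).smul_const (B h h)
    refine (((h1.sub h2).sub h3).congr_deriv ?_).hasDerivWithinAt
    simp only [map_smul, sub_apply, smul_apply, one_smul]
    norm_num
  have hbound : ∀ t ∈ Ico (0 : ℝ) 1,
      ‖(fderiv ℝ f (x + t • h) - fderiv ℝ f x - B (t • h)) h‖ ≤ c * ‖h‖ ^ 2 := by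
    intro t ht
    calc _ ≤ ‖fderiv ℝ f (x + t • h) - fderiv ℝ f x - B (t • h)‖ * ‖h‖ :=
          ContinuousLinearMap.le_opNorm _ _
      _ ≤ c * ‖t • h‖ * ‖h‖ := by gcongr; exact (hball _ (hseg t (Ico_subset_Icc_self ht))).2
      _ ≤ c * ‖h‖ ^ 2 := by
        rw [norm_smul, Real.norm_of_nonneg ht.1]
        nlinarith [mul_le_mul_of_nonneg_left ht.2.le (mul_nonneg hc.le (sq_nonneg ‖h‖))]
  have hmv := norm_image_sub_le_of_norm_deriv_le_segment_01' hderiv hbound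
  simp only [one_smul, one_pow, zero_smul, zero_pow two_ne_zero, zero_div, add_zero, sub_zero,
    norm_pow, norm_norm] at hmv ⊢
  convert hmv using 2
  rw [one_div]
  abel

end Normed

theorem ContinuousWithinAt.le_csSup_image {α β : Type*} [TopologicalSpace α]
    [ConditionallyCompleteLinearOrder β] [TopologicalSpace β] [OrderClosedTopology β]
    {f : α → β} {s : Set α} {y : α} (hy : y ∈ closure s) (hf : ContinuousWithinAt f s y)
    (hbdd : BddAbove (f '' s)) : f y ≤ sSup (f '' s) :=
  hf.closure_le hy continuousWithinAt_const fun _ hz => le_csSup hbdd (mem_image_of_mem f hz)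

theorem tendsto_div_sq_of_isLittleO {F : ℝ → ℝ} {c : ℝ}
    (h : (fun r => F r - r ^ 2 * c) =o[𝓝[>] 0] fun r => r ^ 2) :
    Tendsto (fun r => 1 / r ^ 2 * F r) (𝓝[>] 0) (𝓝 c) := by
  have hlim := h.tendsto_div_nhds_zero.add_const c
  rw [zero_add] at hlim
  refine hlim.congr' ?_
  filter_upwards [self_mem_nhdsWithin] with r (hr : 0 < r)
  field_simp
  ring

section InnerProduct

variable {E : Type*} [NormedAddCommGroup E] [InnerProductSpace ℝ E]

theorem norm_sub_smul_sq_le {ν h : E} {r : ℝ} (hν : ‖ν‖ = 1) (hr : 0 ≤ r) (hh : ‖h‖ ≤ r) :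
    ‖h - r • ν‖ ^ 2 ≤ 2 * r * (r - ⟪ν, h⟫_ℝ) := by
  rw [norm_sub_sq_real, real_inner_smul_right, real_inner_comm, norm_smul, hν,
    Real.norm_of_nonneg hr]
  nlinarith [norm_nonneg h]

theorem mul_inner_add_half_apply_le {ν h : E} {a r : ℝ} (B : E →L[ℝ] E →L[ℝ] ℝ)
    (hν : ‖ν‖ = 1) (ha : 0 < a) (hr : 0 < r) (hh : ‖h‖ ≤ r) :
    a * ⟪ν, h⟫_ℝ + B h h / 2 ≤ a * r + r ^ 2 * B ν ν / 2 + ‖B‖ ^ 2 * r ^ 3 / (2 * a) := by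
  set e := ‖h - r • ν‖
  have he0 : 0 ≤ e := norm_nonneg _
  have he : e ^ 2 ≤ 2 * r * (r - ⟪ν, h⟫_ℝ) := norm_sub_smul_sq_le hν hr.le hh
  have hB : |B h h - r ^ 2 * B ν ν| ≤ 2 * ‖B‖ * r * e := by
    have hdiff := B.norm_apply_self_sub_apply_self_le h (r • ν)
    rw [norm_smul, hν, Real.norm_of_nonneg hr.le, mul_one] at hdiff
    simp only [map_smul, smul_apply, smul_eq_mul, Real.norm_eq_abs] at hdiff
    calc |B h h - r ^ 2 * B ν ν| = |B h h - r * (r * B ν ν)| := by ring_nf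
      _ ≤ ‖B‖ * (‖h‖ + r) * e := hdiff
      _ ≤ 2 * ‖B‖ * r * e := by
        nlinarith [mul_le_mul_of_nonneg_left hh (mul_nonneg (norm_nonneg B) he0)]
  -- AM-GM: the linear loss `a (r - ⟪ν, h⟫) ≥ a e² / (2 r)` absorbs the quadratic gain `‖B‖ r e`.
  have hgain : ‖B‖ * r * e - a * (r - ⟪ν, h⟫_ℝ) ≤ ‖B‖ ^ 2 * r ^ 3 / (2 * a) := by
    rw [le_div_iff₀ (by positivity)]
    nlinarith [sq_nonneg (a * e - ‖B‖ * r ^ 2), mul_le_mul_of_nonneg_left he ha.le]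
  linarith [(abs_le.mp hB).2]

theorem abs_sSup_image_ball_sub_le {u : E → ℝ} {x ν : E} {a r η : ℝ}
    (B : E →L[ℝ] E →L[ℝ] ℝ) (hν : ‖ν‖ = 1) (ha : 0 < a) (hr : 0 < r)
    (htaylor : ∀ h, ‖h‖ ≤ r → |u (x + h) - u x - (a * ⟪ν, h⟫_ℝ + B h h / 2)| ≤ η)
    (hcont : ContinuousAt u (x + r • ν)) :
    |sSup (u '' ball x r) - (u x + a * r + r ^ 2 * B ν ν / 2)| ≤
      η + ‖B‖ ^ 2 * r ^ 3 / (2 * a) := by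
  have hupper : ∀ y ∈ ball x r,
      u y ≤ u x + a * r + r ^ 2 * B ν ν / 2 + (η + ‖B‖ ^ 2 * r ^ 3 / (2 * a)) := by
    intro y hy
    have hh : ‖y - x‖ ≤ r := (mem_ball_iff_norm.mp hy).le
    have hT := htaylor (y - x) hh
    rw [add_sub_cancel] at hT
    linarith [(abs_le.mp hT).2, mul_inner_add_half_apply_le B hν ha hr hh]
  have hbdd : BddAbove (u '' ball x r) := ⟨_, forall_mem_image.2 hupper⟩
  have hle := csSup_le ((nonempty_ball.2 hr).image u) (forall_mem_image.2 hupper)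
  have hrν : ‖r • ν‖ = r := by rw [norm_smul, hν, Real.norm_of_nonneg hr.le, mul_one]
  have hge : u (x + r • ν) ≤ sSup (u '' ball x r) := by
    refine hcont.continuousWithinAt.le_csSup_image ?_ hbdd
    rw [closure_ball x hr.ne', mem_closedBall_iff_norm, add_sub_cancel_left, hrν]
  have hT := htaylor (r • ν) hrν.le
  simp only [map_smul, smul_apply, smul_eq_mul, real_inner_smul_right, real_inner_self_eq_norm_sq,
    hν, one_pow, mul_one] at hT
  have hdefect : 0 ≤ ‖B‖ ^ 2 * r ^ 3 / (2 * a) := by positivity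
  rw [abs_le]
  constructor <;> nlinarith [(abs_le.mp hT).1, (abs_le.mp hT).2]

theorem isLittleO_sSup_image_ball {u : E → ℝ} {x ν : E} {a : ℝ} {B : E →L[ℝ] E →L[ℝ] ℝ}
    (hν : ‖ν‖ = 1) (ha : 0 < a) (hdiff : ∀ᶠ y in 𝓝 x, DifferentiableAt ℝ u y)
    (hB : HasFDerivAt (fderiv ℝ u) B x) (hgrad : fderiv ℝ u x = a • innerSL ℝ ν) :
    (fun r => sSup (u '' ball x r) - (u x + a * r + r ^ 2 * B ν ν / 2)) =o[𝓝[>] 0]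
      fun r => r ^ 2 := by
  refine isLittleO_iff.mpr fun c hc => ?_
  obtain ⟨δ₁, hδ₁, htaylor⟩ := Metric.eventually_nhds_iff_ball.mp
    ((isLittleO_second_order_taylor hdiff hB).def (half_pos hc))
  obtain ⟨δ₂, hδ₂, hcont⟩ := Metric.eventually_nhds_iff_ball.mp hdiff
  have hρ : 0 < min (min δ₁ δ₂) (a * c / (‖B‖ ^ 2 + 1)) := by positivity
  filter_upwards [Ioo_mem_nhdsGT hρ] with r ⟨hr, hrρ⟩
  simp only [lt_min_iff] at hrρ
  obtain ⟨⟨hrδ₁, hrδ₂⟩, hrB⟩ := hrρ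
  have htaylor' : ∀ h, ‖h‖ ≤ r →
      |u (x + h) - u x - (a * ⟪ν, h⟫_ℝ + B h h / 2)| ≤ c / 2 * r ^ 2 := by
    intro h hh
    have hT := htaylor h (mem_ball_zero_iff.2 (hh.trans_lt hrδ₁))
    rw [hgrad] at hT
    simp only [smul_apply, innerSL_apply_apply, smul_eq_mul, norm_pow, norm_norm] at hT
    rw [Real.norm_eq_abs] at hT
    calc _ = |u (x + h) - u x - a * ⟪ν, h⟫_ℝ - 2⁻¹ * B h h| := by ring_nf
      _ ≤ c / 2 * ‖h‖ ^ 2 := hT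
      _ ≤ c / 2 * r ^ 2 := by gcongr
  have hcont' : ContinuousAt u (x + r • ν) := by
    refine (hcont _ ?_).continuousAt
    rwa [mem_ball_iff_norm, add_sub_cancel_left, norm_smul, hν, mul_one,
      Real.norm_of_nonneg hr.le]
  have hdefect : ‖B‖ ^ 2 * r ^ 3 / (2 * a) ≤ c / 2 * r ^ 2 := by
    rw [lt_div_iff₀ (by positivity)] at hrB
    rw [div_le_iff₀ (by positivity)]
    nlinarith [pow_pos hr 2]
  rw [Real.norm_eq_abs, Real.norm_of_nonneg (by positivity)]
  linarith [abs_sSup_image_ball_sub_le B hν ha hr htaylor' hcont']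

theorem tendsto_midrange_div_sq [CompleteSpace E] {u : E → ℝ} {x : E}
    {B : E →L[ℝ] E →L[ℝ] ℝ} (hdiff : ∀ᶠ y in 𝓝 x, DifferentiableAt ℝ u y)
    (hB : HasFDerivAt (fderiv ℝ u) B x) (hg : ∇ u x ≠ 0) :
    Tendsto (fun r => 1 / r ^ 2 * ((sSup (u '' ball x r) + sInf (u '' ball x r)) / 2 - u x))
      (𝓝[>] 0) (𝓝 (B (∇ u x) (∇ u x) / (2 * ‖∇ u x‖ ^ 2))) := by
  set g := ∇ u x
  have ha : 0 < ‖g‖ := norm_pos_iff.2 hg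
  set ν := ‖g‖⁻¹ • g
  have hν : ‖ν‖ = 1 := norm_smul_inv_norm hg
  have hgrad : fderiv ℝ u x = ‖g‖ • innerSL ℝ ν := by
    ext h
    simp only [smul_apply, innerSL_apply_apply, ν, real_inner_smul_left, smul_eq_mul, g,
      inner_gradient_left]
    exact (mul_inv_cancel_left₀ ha.ne' _).symm
  have hsup := isLittleO_sSup_image_ball hν ha hdiff hB hgrad
  -- `-u` has gradient `-g` and Hessian `-B`, so its expansion flips only the second-order term.
  have hsup_neg := isLittleO_sSup_image_ball (u := -u) (ν := -ν) (B := -B)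
    (by rwa [norm_neg]) ha (hdiff.mono fun _ hy => hy.neg)
    (by rw [show fderiv ℝ (-u) = -fderiv ℝ u from funext fun _ => fderiv_neg]; exact hB.neg)
    (by rw [fderiv_neg, hgrad, map_neg, smul_neg])
  have hInf : ∀ r, sInf (u '' ball x r) = -sSup ((-u) '' ball x r) := fun r => by
    rw [Real.sInf_def, ← Set.image_neg_eq_neg, image_image]
    rfl
  have hBν : B ν ν / 2 = B g g / (2 * ‖g‖ ^ 2) := by
    simp only [ν, map_smul, smul_apply, smul_eq_mul]
    field_simp
  refine tendsto_div_sq_of_isLittleO ?_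
  rw [← hBν]
  refine ((hsup.sub hsup_neg).const_mul_left (1 / 2)).congr_left fun r => ?_
  simp only [hInf, Pi.neg_apply, neg_apply, map_neg, neg_neg]
  ring

end InnerProduct

theorem EuclideanSpace.sum_sum_apply_basisFun_mul {ι : Type*} [Fintype ι]
    (B : EuclideanSpace ℝ ι →L[ℝ] EuclideanSpace ℝ ι →L[ℝ] ℝ) (v : EuclideanSpace ℝ ι) :
    ∑ i, ∑ j, B (EuclideanSpace.basisFun ι ℝ i) (EuclideanSpace.basisFun ι ℝ j) * v i * v j =
      B v v := by
  conv_rhs => rw [← (EuclideanSpace.basisFun ι ℝ).sum_repr v]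
  simp only [map_sum, map_smul, sum_apply, smul_apply, smul_eq_mul, Finset.mul_sum,
    EuclideanSpace.basisFun_repr]
  rw [Finset.sum_comm]
  exact Finset.sum_congr rfl fun i _ => Finset.sum_congr rfl fun j _ => by ring

theorem asymptotic_midrange_infinity_laplacian
    (D : Set (EuclideanSpace ℝ (Fin 2))) (hD : IsOpen D)
    (u : EuclideanSpace ℝ (Fin 2) → ℝ) (hu : ContDiffOn ℝ 2 u D)
    (x : EuclideanSpace ℝ (Fin 2)) (hx : x ∈ D) (hgrad : fderiv ℝ u x ≠ 0) :
    Tendsto (fun r : ℝ =>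
        (1 / r ^ 2) * ((sSup (u '' ball x r) + sInf (u '' ball x r)) / 2 - u x))
      (nhdsWithin 0 (Set.Ioi 0))
      (nhds ((∑ i : Fin 2, ∑ j : Fin 2,
          iteratedFDeriv ℝ 2 u x ![EuclideanSpace.basisFun (Fin 2) ℝ i,
              EuclideanSpace.basisFun (Fin 2) ℝ j] *
            fderiv ℝ u x (EuclideanSpace.basisFun (Fin 2) ℝ i) *
            fderiv ℝ u x (EuclideanSpace.basisFun (Fin 2) ℝ j)) /
        (2 * ‖fderiv ℝ u x‖ ^ 2))) := by
  have hdiff : ∀ᶠ y in 𝓝 x, DifferentiableAt ℝ u y := by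
    filter_upwards [hD.mem_nhds hx] with y hy
    exact (hu.contDiffAt (hD.mem_nhds hy)).differentiableAt (by norm_num)
  have hB : HasFDerivAt (fderiv ℝ u) (fderiv ℝ (fderiv ℝ u) x) x :=
    (((hu.contDiffAt (hD.mem_nhds hx)).fderiv_right (m := 1) (by norm_num)).differentiableAt
      (by norm_num)).hasFDerivAt
  have hg : ∇ u x ≠ 0 := by
    rwa [gradient, ne_eq, LinearIsometryEquiv.map_eq_zero_iff]
  have hnorm : ‖∇ u x‖ = ‖fderiv ℝ u x‖ := LinearIsometryEquiv.norm_map _ _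
  have hcoord : ∀ i, fderiv ℝ u x (EuclideanSpace.basisFun (Fin 2) ℝ i) = ∇ u x i := fun i => by
    rw [← inner_gradient_left, EuclideanSpace.inner_basisFun_real]
  simp only [iteratedFDeriv_two_apply, Matrix.cons_val_zero, Matrix.cons_val_one, hcoord,
    EuclideanSpace.sum_sum_apply_basisFun_mul, ← hnorm]
  exact tendsto_midrange_div_sq hdiff hB hg
end
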